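/- Let k be a field of characteristic 0 and a, b ∈ k with ab ≠ 1. Let S = k⟨x,y⟩/I where I is the two-sided ideal generated by r₁ = xy² + yxy + y²x + ax³ and r₂ = yx² + xyx + x²y + by³. Then the images of x³ and y³ in S are central elements of S, i.e. they commute with every element of S (equivalently, x·y³ − y³·x ∈ I, y·x³ − x³·y ∈ I). -/
import Mathlib


/-- `x`, the first generator of the free algebra `k⟨x,y⟩`. -/
noncomputable def Xg (k : Type*) [CommRing k] : FreeAlgebra k (Fin 2) :=
  FreeAlgebra.ι k 0

/-- `y`, the second generator of the free algebra `k⟨x,y⟩`. -/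
noncomputable def Yg (k : Type*) [CommRing k] : FreeAlgebra k (Fin 2) :=
  FreeAlgebra.ι k 1

/-- The relation identifying `r₁ = xy² + yxy + y²x + ax³` and
`r₂ = yx² + xyx + x²y + by³` with `0`; `RingQuot` of this relation is the quotient
`k⟨x,y⟩/(r₁, r₂)` by the two-sided ideal generated by `r₁, r₂`. -/
noncomputable def rel13 (k : Type*) [CommRing k] (a b : k) :
    FreeAlgebra k (Fin 2) → FreeAlgebra k (Fin 2) → Prop := fun p q =>
  (p = Xg k * Yg k * Yg k + Yg k * Xg k * Yg k + Yg k * Yg k * Xg k +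
        a • (Xg k * Xg k * Xg k) ∨
   p = Yg k * Xg k * Xg k + Xg k * Yg k * Xg k + Xg k * Xg k * Yg k +
        b • (Yg k * Yg k * Yg k)) ∧ q = 0

/-- if `ab ≠ 1`, then the images of `x³` and `y³` in
`S = k⟨x,y⟩/(xy² + yxy + y²x + ax³, yx² + xyx + x²y + by³)` are central. -/
theorem statement13 (k : Type*) [Field k] [CharZero k] (a b : k) (hab : a * b ≠ 1) :
    ∀ s : RingQuot (rel13 k a b),
      s * RingQuot.mkAlgHom k (rel13 k a b) (Xg k * Xg k * Xg k) =
        RingQuot.mkAlgHom k (rel13 k a b) (Xg k * Xg k * Xg k) * s ∧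
      s * RingQuot.mkAlgHom k (rel13 k a b) (Yg k * Yg k * Yg k) =
        RingQuot.mkAlgHom k (rel13 k a b) (Yg k * Yg k * Yg k) * s := by
  set M := RingQuot.mkAlgHom k (rel13 k a b) with hM
  set X := M (Xg k) with hX
  set Y := M (Yg k) with hY
  have h1 : X * Y * Y + Y * X * Y + Y * Y * X + a • (X * X * X) = 0 := by
    have h := RingQuot.mkAlgHom_rel k
      (show rel13 k a b (Xg k * Yg k * Yg k + Yg k * Xg k * Yg k + Yg k * Yg k * Xg k +
        a • (Xg k * Xg k * Xg k)) 0 from ⟨Or.inl rfl, rfl⟩)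
    simpa only [map_add, map_mul, map_smul, map_zero, ← hX, ← hY, ← hM] using h
  have h2 : Y * X * X + X * Y * X + X * X * Y + b • (Y * Y * Y) = 0 := by
    have h := RingQuot.mkAlgHom_rel k
      (show rel13 k a b (Yg k * Xg k * Xg k + Xg k * Yg k * Xg k + Xg k * Xg k * Yg k +
        b • (Yg k * Yg k * Yg k)) 0 from ⟨Or.inr rfl, rfl⟩)
    simpa only [map_add, map_mul, map_smul, map_zero, ← hX, ← hY, ← hM] using h
  set C := X * X * X * Y - Y * (X * X * X) with hC
  set D := X * (Y * Y * Y) - Y * Y * Y * X with hD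
  have c1 : C + b • D = 0 := by
    have h := congrArg (fun z => X * z - z * X) h2
    simp only [mul_zero, zero_mul, sub_zero] at h
    rw [← h, hC, hD]
    simp only [mul_add, add_mul, mul_smul_comm, smul_mul_assoc, smul_sub, mul_assoc]
    abel
  have c2 : a • C + D = 0 := by
    have h := congrArg (fun z => z * Y - Y * z) h1
    simp only [mul_zero, zero_mul, sub_zero] at h
    rw [← h, hC, hD]
    simp only [mul_add, add_mul, mul_smul_comm, smul_mul_assoc, smul_sub, smul_add, mul_assoc]
    abel
  have hDC : D = -(a • C) := eq_neg_of_add_eq_zero_right c2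
  have hCeq : C = (b * a) • C := by
    have h := c1
    rw [hDC, smul_neg, ← sub_eq_add_neg, sub_eq_zero, ← mul_smul] at h
    exact h
  have hba : (1 : k) - b * a ≠ 0 := by
    have h : b * a ≠ 1 := by rwa [mul_comm] at hab
    exact sub_ne_zero_of_ne (Ne.symm h)
  have hC0 : C = 0 := by
    have h1' : algebraMap k (RingQuot (rel13 k a b)) (1 - b * a) * C = 0 := by
      rw [map_sub, map_one, sub_mul, one_mul, ← Algebra.smul_def, ← hCeq, sub_self]
    have h2' := congrArg
      (fun z => algebraMap k (RingQuot (rel13 k a b)) ((1 - b * a)⁻¹) * z) h1'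
    simpa only [← mul_assoc, ← map_mul, inv_mul_cancel₀ hba, map_one, one_mul,
      mul_zero] using h2' 
  have hD0 : D = 0 := by rw [hDC, hC0, smul_zero, neg_zero]
  have hXc : X * X * X * Y = Y * (X * X * X) := by
    have := sub_eq_zero.mp hC0; exact this
  have hYc : X * (Y * Y * Y) = Y * Y * Y * X := sub_eq_zero.mp hD0
  intro s
  obtain ⟨p, rfl⟩ := RingQuot.mkAlgHom_surjective k (rel13 k a b) s
  rw [← hM]
  induction p with
  | grade0 r =>
      constructor <;> simp [Algebra.commutes]
  | grade1 i =>
      fin_cases i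
      · constructor
        · show X * M (Xg k * Xg k * Xg k) = M (Xg k * Xg k * Xg k) * X
          simp only [map_mul, ← hX]
          noncomm_ring
        · show X * M (Yg k * Yg k * Yg k) = M (Yg k * Yg k * Yg k) * X
          simp only [map_mul, ← hX, ← hY]
          exact hYc
      · constructor
        · show Y * M (Xg k * Xg k * Xg k) = M (Xg k * Xg k * Xg k) * Y
          simp only [map_mul, ← hX, ← hY]
          exact hXc.symm
        · show Y * M (Yg k * Yg k * Yg k) = M (Yg k * Yg k * Yg k) * Y
          simp only [map_mul, ← hY]
          noncomm_ring
  | mul p q hp hq =>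
      obtain ⟨hp1, hp2⟩ := hp
      obtain ⟨hq1, hq2⟩ := hq
      constructor
      · rw [map_mul M p q, mul_assoc, hq1, ← mul_assoc, hp1, mul_assoc]
      · rw [map_mul M p q, mul_assoc, hq2, ← mul_assoc, hp2, mul_assoc]
  | add p q hp hq =>
      obtain ⟨hp1, hp2⟩ := hp
      obtain ⟨hq1, hq2⟩ := hq
      constructor
      · rw [map_add M p q, add_mul, mul_add, hp1, hq1]
      · rw [map_add M p q, add_mul, mul_add, hp2, hq2]
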